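/- For any formulas F and G, the nested program P1 = { F;G , ⊥ ← F,G } and the nested program P2 = { F ← not G , G ← not F , ⊥ ← F,G } have exactly the same SE-models, and hence are strongly equivalent. -/

import Mathlib

open scoped Classical

inductive Lit where
  | pos : ℕ → Lit
  | neg : ℕ → Lit
deriving DecidableEq

inductive Fml where
  | bot : Fml
  | top : Fml
  | lit : Lit → Fml
  | not : Fml → Fml
  | conj : Fml → Fml → Fml
  | disj : Fml → Fml → Fml
deriving DecidableEq

structure Rule where
  head : Fml
  body : Fml
deriving DecidableEq

abbrev Prog := Set Rule

/-- A set of literals is consistent if it contains no complementary pair. -/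
def Consistent (X : Set Lit) : Prop :=
  ∀ a : ℕ, ¬ (Lit.pos a ∈ X ∧ Lit.neg a ∈ X)

def Sat (X : Set Lit) : Fml → Prop
  | Fml.bot => False
  | Fml.top => True
  | Fml.lit l => l ∈ X
  | Fml.not F => ¬ Sat X F
  | Fml.conj F G => Sat X F ∧ Sat X G
  | Fml.disj F G => Sat X F ∨ Sat X G

def SatRule (X : Set Lit) (r : Rule) : Prop := Sat X r.body → Sat X r.head

def SatProg (X : Set Lit) (P : Prog) : Prop := ∀ r ∈ P, SatRule X r

/-- The reduct of a formula relative to X. -/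
noncomputable def Reduct (X : Set Lit) : Fml → Fml
  | Fml.bot => Fml.bot
  | Fml.top => Fml.top
  | Fml.lit l => Fml.lit l
  | Fml.not F => if Sat X F then Fml.bot else Fml.top
  | Fml.conj F G => Fml.conj (Reduct X F) (Reduct X G)
  | Fml.disj F G => Fml.disj (Reduct X F) (Reduct X G)

noncomputable def ReductRule (X : Set Lit) (r : Rule) : Rule :=
  ⟨Reduct X r.head, Reduct X r.body⟩

noncomputable def ReductProg (X : Set Lit) (P : Prog) : Prog :=
  ReductRule X '' P

/-- Y is an answer set for P: Y is minimal among consistent sets satisfying the reduct of P w.r.t. Y. -/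
def AnswerSet (Y : Set Lit) (P : Prog) : Prop :=
  Consistent Y ∧ SatProg Y (ReductProg Y P) ∧
    ∀ Z : Set Lit, Consistent Z → SatProg Z (ReductProg Y P) → Z ⊆ Y → Z = Y

def SEModel (P : Prog) (X Y : Set Lit) : Prop :=
  Consistent X ∧ Consistent Y ∧ X ⊆ Y ∧ SatProg Y P ∧ SatProg X (ReductProg Y P)

def StrongEq (P Q : Prog) : Prop :=
  ∀ R : Prog, ∀ Y : Set Lit, AnswerSet Y (P ∪ R) ↔ AnswerSet Y (Q ∪ R)

def Fml.negFree : Fml → Prop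
  | Fml.bot => True
  | Fml.top => True
  | Fml.lit l => ∃ a, l = Lit.pos a
  | Fml.not F => F.negFree
  | Fml.conj F G => F.negFree ∧ G.negFree
  | Fml.disj F G => F.negFree ∧ G.negFree

def ProgNegFree (P : Prog) : Prop := ∀ r ∈ P, r.head.negFree ∧ r.body.negFree

/-- The set of atoms (positive literals) in a set of literals. -/
def PosLits (Z : Set Lit) : Set Lit := {l ∈ Z | ∃ a, l = Lit.pos a}

def AtomsOnly (Z : Set Lit) : Prop := ∀ l ∈ Z, ∃ a, l = Lit.pos a

lemma Sat.of_reduct_of_subset {X Y : Set Lit} (hXY : X ⊆ Y) :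
    ∀ {F : Fml}, Sat X (Reduct Y F) → Sat Y F
  | Fml.bot, h => h
  | Fml.top, h => h
  | Fml.lit _, h => hXY h
  | Fml.not F, h => by
      by_cases hF : Sat Y F <;> simp_all [Reduct, Sat]
  | Fml.conj _ _, h => ⟨of_reduct_of_subset hXY h.1, of_reduct_of_subset hXY h.2⟩
  | Fml.disj _ _, h => h.imp (of_reduct_of_subset hXY) (of_reduct_of_subset hXY)

lemma sat_reduct_not {X Y : Set Lit} {F : Fml} :
    Sat X (Reduct Y (Fml.not F)) ↔ ¬ Sat Y F := by
  by_cases hF : Sat Y F <;> simp [Reduct, Sat, hF]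

lemma sat_reduct_self {Y : Set Lit} : ∀ {F : Fml}, Sat Y (Reduct Y F) ↔ Sat Y F
  | Fml.bot | Fml.top | Fml.lit _ => Iff.rfl
  | Fml.not _ => sat_reduct_not
  | Fml.conj _ _ => and_congr sat_reduct_self sat_reduct_self
  | Fml.disj _ _ => or_congr sat_reduct_self sat_reduct_self

lemma satProg_reductProg_self {Y : Set Lit} {P : Prog} :
    SatProg Y (ReductProg Y P) ↔ SatProg Y P := by
  simp [SatProg, ReductProg, SatRule, ReductRule, sat_reduct_self]

lemma satProg_union {X : Set Lit} {P Q : Prog} :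
    SatProg X (P ∪ Q) ↔ SatProg X P ∧ SatProg X Q := by
  simp only [SatProg, Set.mem_union, or_imp, forall_and]

lemma reductProg_union {Y : Set Lit} {P Q : Prog} :
    ReductProg Y (P ∪ Q) = ReductProg Y P ∪ ReductProg Y Q :=
  Set.image_union _ _ _

lemma seModel_self_iff {P : Prog} {Y : Set Lit} :
    SEModel P Y Y ↔ Consistent Y ∧ SatProg Y P := by
  simp [SEModel, satProg_reductProg_self]

lemma AnswerSet.union_of_seModel_iff {P Q R : Prog} {Y : Set Lit}
    (hPQ : ∀ X Y, SEModel P X Y ↔ SEModel Q X Y) (hY : AnswerSet Y (P ∪ R)) :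
    AnswerSet Y (Q ∪ R) := by
  obtain ⟨hYcons, hYsat, hYmin⟩ := hY
  obtain ⟨hYP, hYR⟩ := satProg_union.mp (satProg_reductProg_self.mp hYsat)
  have hYQ : SatProg Y Q :=
    (seModel_self_iff.mp ((hPQ Y Y).mp (seModel_self_iff.mpr ⟨hYcons, hYP⟩))).2
  refine ⟨hYcons, satProg_reductProg_self.mpr (satProg_union.mpr ⟨hYQ, hYR⟩), ?_⟩
  intro Z hZcons hZsat hZY
  rw [reductProg_union, satProg_union] at hZsat
  have hZP : SatProg Z (ReductProg Y P) :=
    ((hPQ Z Y).mpr ⟨hZcons, hYcons, hZY, hYQ, hZsat.1⟩).2.2.2.2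
  exact hYmin Z hZcons (reductProg_union ▸ satProg_union.mpr ⟨hZP, hZsat.2⟩) hZY

theorem strongEq_of_seModel_iff {P Q : Prog} (h : ∀ X Y, SEModel P X Y ↔ SEModel Q X Y) :
    StrongEq P Q := fun _ _ =>
  ⟨AnswerSet.union_of_seModel_iff h, AnswerSet.union_of_seModel_iff fun X Y => (h X Y).symm⟩

def xorDisjProg (F G : Fml) : Prog :=
  {⟨Fml.disj F G, Fml.top⟩, ⟨Fml.bot, Fml.conj F G⟩}

def xorLoopProg (F G : Fml) : Prog :=
  {⟨F, Fml.not G⟩, ⟨G, Fml.not F⟩, ⟨Fml.bot, Fml.conj F G⟩}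

lemma satProg_xorDisjProg {X : Set Lit} {F G : Fml} :
    SatProg X (xorDisjProg F G) ↔ (Sat X F ∨ Sat X G) ∧ ¬ (Sat X F ∧ Sat X G) := by
  simp [xorDisjProg, SatProg, SatRule, Sat]

lemma reductProg_xorDisjProg {Y : Set Lit} {F G : Fml} :
    ReductProg Y (xorDisjProg F G) = xorDisjProg (Reduct Y F) (Reduct Y G) := by
  simp [xorDisjProg, ReductProg, Set.image_insert_eq, ReductRule, Reduct]

lemma satProg_xorLoopProg {X : Set Lit} {F G : Fml} :
    SatProg X (xorLoopProg F G) ↔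
      (¬ Sat X G → Sat X F) ∧ (¬ Sat X F → Sat X G) ∧ ¬ (Sat X F ∧ Sat X G) := by
  simp [xorLoopProg, SatProg, SatRule, Sat]

lemma satProg_reductProg_xorLoopProg {X Y : Set Lit} {F G : Fml} :
    SatProg X (ReductProg Y (xorLoopProg F G)) ↔
      (¬ Sat Y G → Sat X (Reduct Y F)) ∧ (¬ Sat Y F → Sat X (Reduct Y G)) ∧
        ¬ (Sat X (Reduct Y F) ∧ Sat X (Reduct Y G)) := by
  simp only [xorLoopProg, ReductProg, Set.image_insert_eq, Set.image_singleton, ReductRule,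
    SatProg, SatRule, Set.forall_mem_insert, Set.mem_singleton_iff, forall_eq, sat_reduct_not]
  simp [Reduct, Sat]

/-- Both programs say "exactly one of `F`, `G`"; on the `X` side the two readings agree because
`X ⊨ F^Y` forces `Y ⊨ F`, and `Y` already decides which of `F`, `G` holds. -/
theorem seModel_xorDisjProg_iff_xorLoopProg {F G : Fml} {X Y : Set Lit} :
    SEModel (xorDisjProg F G) X Y ↔ SEModel (xorLoopProg F G) X Y := by
  simp only [SEModel, reductProg_xorDisjProg, satProg_xorDisjProg, satProg_xorLoopProg,
    satProg_reductProg_xorLoopProg]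
  refine and_congr_right fun _ => and_congr_right fun _ => and_congr_right fun hXY => ?_
  have hF : Sat X (Reduct Y F) → Sat Y F := Sat.of_reduct_of_subset hXY
  have hG : Sat X (Reduct Y G) → Sat Y G := Sat.of_reduct_of_subset hXY
  tauto

/-- P1 = { F;G , ⊥ ← F,G } and P2 = { F ← not G , G ← not F , ⊥ ← F,G }
have the same SE-models, hence are strongly equivalent. -/
theorem stmt8 (F G : Fml) :
    (∀ X Y : Set Lit,
        SEModel ({⟨Fml.disj F G, Fml.top⟩, ⟨Fml.bot, Fml.conj F G⟩} : Prog) X Y ↔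
        SEModel ({⟨F, Fml.not G⟩, ⟨G, Fml.not F⟩, ⟨Fml.bot, Fml.conj F G⟩} : Prog) X Y) ∧
    StrongEq ({⟨Fml.disj F G, Fml.top⟩, ⟨Fml.bot, Fml.conj F G⟩} : Prog)
      ({⟨F, Fml.not G⟩, ⟨G, Fml.not F⟩, ⟨Fml.bot, Fml.conj F G⟩} : Prog) :=
  ⟨fun _ _ => seModel_xorDisjProg_iff_xorLoopProg,
    strongEq_of_seModel_iff fun _ _ => seModel_xorDisjProg_iff_xorLoopProg⟩
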